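/- Let G be a finite simple graph with vertex weights a' : V → ℝ and edge weights w, let γ ∈ [0,1], and define transformed edge weights w'({u,v}) = γ·(a'(u) + a'(v)) + 2·(1−γ)·w({u,v}). For every path p = v_0, v_1, ..., v_k in G with k ≥ 1 (all vertices distinct), one has (1/2)·( Σ_{i=0}^{k−1} w'(v_i, v_{i+1}) − γ·a'(v_0) − γ·a'(v_k) ) = γ · Σ_{i=1}^{k−1} a'(v_i) + (1−γ) · Σ_{i=0}^{k−1} w(v_i, v_{i+1}); that is, half the transformed path cost, after subtracting γ times the vertex weights of the two endpoints, equals the CA-CC objective of the path viewed as a team whose skill holders are exactly its two endpoints and whose connectors are its interior vertices. -/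

import Mathlib

/-!
Every edge `{x, y}` of the walk contributes `γ a'(x) + γ a'(y)` to the transformed cost. Along
the walk the darts start at `support.dropLast = v₀ :: interior` and end at
`support.tail = interior ++ [v_k]`, so each interior vertex is counted twice and each endpoint
once; halving after removing the endpoints leaves `γ · CA + (1 - γ) · CC`.
-/

namespace SimpleGraph.Walk

variable {V : Type*} {G : SimpleGraph V} {u v : V}

lemma tail_support_ne_nil {p : G.Walk u v} (hp : ¬p.Nil) : p.support.tail ≠ [] :=
  List.ne_nil_of_mem (end_mem_tail_support hp)

lemma dropLast_support_of_not_nil {p : G.Walk u v} (hp : ¬p.Nil) :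
    p.support.dropLast = u :: p.support.tail.dropLast := by
  rw [← p.cons_tail_support, List.dropLast_cons_of_ne_nil (tail_support_ne_nil hp)]
  rfl

lemma tail_support_of_not_nil {p : G.Walk u v} (hp : ¬p.Nil) :
    p.support.tail = p.support.tail.dropLast ++ [v] := by
  have hlast : p.support.tail.getLast (tail_support_ne_nil hp) = v := by
    rw [List.getLast_tail, getLast_support]
  conv_lhs => rw [← List.dropLast_append_getLast (tail_support_ne_nil hp), hlast]

theorem sum_map_darts_fst_add_snd {M : Type*} [AddCommMonoid M] (f : V → M)
    {p : G.Walk u v} (hp : ¬p.Nil) :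
    (p.darts.map fun d => f d.fst + f d.snd).sum
      = f u + f v + 2 • (p.support.tail.dropLast.map f).sum := by
  have hfst : p.darts.map (fun d => f d.fst) = (u :: p.support.tail.dropLast).map f := by
    rw [← dropLast_support_of_not_nil hp, ← map_fst_darts, List.map_map]; rfl
  have hsnd : p.darts.map (fun d => f d.snd) = (p.support.tail.dropLast ++ [v]).map f := by
    rw [← tail_support_of_not_nil hp, ← map_snd_darts, List.map_map]; rfl
  rw [List.sum_map_add, hfst, hsnd, List.map_cons, List.map_append, List.sum_cons,
    List.sum_append, two_nsmul]
  simp only [List.map_cons, List.map_nil, List.sum_cons, List.sum_nil, add_zero]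
  abel

theorem sum_map_edges_of_eq_add_add {M : Type*} [AddCommMonoid M] (f : V → M)
    (g w' : Sym2 V → M) (hw' : ∀ x y, w' s(x, y) = f x + f y + g s(x, y))
    {p : G.Walk u v} (hp : ¬p.Nil) :
    (p.edges.map w').sum
      = f u + f v + 2 • (p.support.tail.dropLast.map f).sum + (p.edges.map g).sum := by
  rw [← sum_map_darts_fst_add_snd f hp, edges_eq_map_darts, List.map_map, List.map_map,
    ← List.sum_map_add]
  exact congrArg List.sum (List.map_congr_left fun d _ => hw' d.fst d.snd)

end SimpleGraph.Walk

theorem transformed_path_cost_CA_CC_general {V : Type*} (G : SimpleGraph V)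
    (a' : V → ℝ) (w : Sym2 V → ℝ) (γ : ℝ)
    (w' : Sym2 V → ℝ)
    (hw' : ∀ u v : V, w' s(u, v) = γ * (a' u + a' v) + 2 * (1 - γ) * w s(u, v))
    {u v : V} (p : G.Walk u v) (hk : 1 ≤ p.length) :
    (1 / 2) * ((p.edges.map w').sum - γ * a' u - γ * a' v) =
      γ * ((p.support.tail.dropLast).map a').sum
        + (1 - γ) * (p.edges.map w).sum := by
  have hw'_split : ∀ x y, w' s(x, y) = γ * a' x + γ * a' y + 2 * (1 - γ) * w s(x, y) := by
    intro x y
    rw [hw', mul_add]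
  rw [SimpleGraph.Walk.sum_map_edges_of_eq_add_add (fun x => γ * a' x)
      (fun e => 2 * (1 - γ) * w e) w' hw'_split
      (SimpleGraph.Walk.not_nil_iff_lt_length.mpr hk),
    List.sum_map_mul_left, List.sum_map_mul_left, nsmul_eq_mul]
  push_cast
  ring

/-- For a path `p = v₀, v₁, …, v_k` (k ≥ 1) in `G`, half of the
transformed path cost minus `γ` times the endpoint weights equals the CA-CC
objective of the path: `γ·Σ_{interior} a' + (1-γ)·Σ_{edges} w`. -/
theorem transformed_path_cost_CA_CC {V : Type*} (G : SimpleGraph V)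
    (a' : V → ℝ) (w : Sym2 V → ℝ) (γ : ℝ) (hγ : γ ∈ Set.Icc (0 : ℝ) 1)
    (w' : Sym2 V → ℝ)
    (hw' : ∀ u v : V, w' s(u, v) = γ * (a' u + a' v) + 2 * (1 - γ) * w s(u, v))
    {u v : V} (p : G.Walk u v) (hp : p.IsPath) (hk : 1 ≤ p.length) :
    (1 / 2) * ((p.edges.map w').sum - γ * a' u - γ * a' v) =
      γ * ((p.support.tail.dropLast).map a').sum
        + (1 - γ) * (p.edges.map w).sum :=
  transformed_path_cost_CA_CC_general G a' w γ w' hw' p hk
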